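/- In the max-max diffusion model, if all K sources have the same information value I and every node trusts all sources equally (α(k,u) is independent of k), then seeding the K sources with sets ψ_1,…,ψ_K yields the same final converted (Believed) set as seeding a single source of value I with the set ψ = ψ_1 ∪ ⋯ ∪ ψ_K. -/

import Mathlib

open scoped NNReal

/-- Per-source information values in the max-max diffusion model (λ_d = λ_s = 0) with
threshold gating and no evacuation: at each step a node `v` whose overall information
value reaches its threshold `t v` propagates its per-source values, attenuated by the
edge trust `α v u`, to every node `u`; values are combined by taking maxima. -/
noncomputable def mval {V : Type*} [Fintype V] {K : ℕ} (α : V → V → ℝ≥0) (t : V → ℝ≥0)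
    (init : V → Fin K → ℝ≥0) : ℕ → V → Fin K → ℝ≥0
  | 0 => init
  | m + 1 => fun u k =>
      mval α t init m u k ⊔
        Finset.univ.sup fun v : V =>
          if t v ≤ Finset.univ.sup (fun k' => mval α t init m v k')
          then α v u * mval α t init m v k else 0

/-- Overall information value at node `u` after `m` steps: maximum over sources. -/
noncomputable def minfo {V : Type*} [Fintype V] {K : ℕ} (α : V → V → ℝ≥0) (t : V → ℝ≥0)
    (init : V → Fin K → ℝ≥0) (m : ℕ) (u : V) : ℝ≥0 :=
  Finset.univ.sup fun k => mval α t init m u k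

open Finset

/-!
Since the trust `α v u` multiplies every per-source value alike and maxima commute with one
another and with multiplication, the overall value `minfo` obeys a recursion of its own, in which
the per-source values no longer appear. Two seedings with the same initial overall values
therefore have the same overall values at every step, hence the same converted set; and seeding
identical sources with `ψ 1, …, ψ K` gives every node the same initial overall value as seeding
one source with their union.
-/

section MaxMax

variable {V : Type*} [Fintype V] (α : V → V → ℝ≥0) (t : V → ℝ≥0)

theorem minfo_succ {K : ℕ} (init : V → Fin K → ℝ≥0) (m : ℕ) (u : V) :
    minfo α t init (m + 1) u =
      minfo α t init m u ⊔ univ.sup fun v =>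
        if t v ≤ minfo α t init m v then α v u * minfo α t init m v else 0 := by
  refine Finset.sup_sup.trans (congrArg₂ (· ⊔ ·) rfl ?_)
  rw [Finset.sup_comm]
  refine sup_congr rfl fun v _ => ?_
  rw [← minfo]
  split_ifs
  · exact (NNReal.mul_finset_sup _ _ _).symm
  · simp

theorem minfo_eq_of_minfo_zero_eq {K L : ℕ} {f : V → Fin K → ℝ≥0} {g : V → Fin L → ℝ≥0}
    (h₀ : minfo α t f 0 = minfo α t g 0) : ∀ m, minfo α t f m = minfo α t g m
  | 0 => h₀
  | m + 1 => by
    funext u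
    rw [minfo_succ, minfo_succ, minfo_eq_of_minfo_zero_eq h₀ m]

end MaxMax

theorem Finset.sup_ite_mem_eq_ite_mem_biUnion {ι V α : Type*} [DecidableEq V]
    [SemilatticeSup α] [OrderBot α] (s : Finset ι) (ψ : ι → Finset V) (u : V) (a : α) :
    (s.sup fun j => if u ∈ ψ j then a else ⊥) = if u ∈ s.biUnion ψ then a else ⊥ := by
  split_ifs with hu
  · obtain ⟨j, hj, huj⟩ := mem_biUnion.mp hu
    refine le_antisymm (Finset.sup_le fun k _ => ?_) ?_
    · split_ifs <;> simp
    · simpa [huj] using le_sup (f := fun j => if u ∈ ψ j then a else ⊥) hj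
  · refine le_bot_iff.mp (Finset.sup_le fun k hk => ?_)
    rw [if_neg fun huk => hu (mem_biUnion.mpr ⟨k, hk, huk⟩)]

theorem identical_sources_eq_single_source_general {V : Type*} [Fintype V] [DecidableEq V] {K : ℕ}
    (α : V → V → ℝ≥0) (t : V → ℝ≥0) (I : ℝ≥0) (β : V → ℝ≥0)
    (ψ : Fin K → Finset V) :
    {u : V | ∃ m : ℕ,
        t u ≤ minfo α t (fun u (j : Fin K) => if u ∈ ψ j then β u * I else 0) m u} =
    {u : V | ∃ m : ℕ,
        t u ≤ minfo α t
          (fun u (_ : Fin 1) => if u ∈ Finset.univ.biUnion ψ then β u * I else 0) m u} := by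
  have h₀ : minfo α t (fun u (j : Fin K) => if u ∈ ψ j then β u * I else 0) 0 =
      minfo α t (fun u (_ : Fin 1) => if u ∈ univ.biUnion ψ then β u * I else 0) 0 := by
    funext u
    exact (Finset.sup_ite_mem_eq_ite_mem_biUnion univ ψ u (β u * I)).trans
      (sup_const univ_nonempty _).symm
  simp only [minfo_eq_of_minfo_zero_eq α t h₀]

/-- In the max-max model, if all `K` sources have the same information value `I` and every
node `u` trusts all sources equally (trust `β u`, independent of the source), then seeding
the `K` sources with sets `ψ 1, …, ψ K` yields the same final converted (Believed) set as
seeding a single source of value `I` with the union `ψ 1 ∪ ⋯ ∪ ψ K`. -/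
theorem identical_sources_eq_single_source {V : Type*} [Fintype V] [DecidableEq V] {K : ℕ}
    (α : V → V → ℝ≥0) (t : V → ℝ≥0) (I : ℝ≥0) (β : V → ℝ≥0)
    (hα : ∀ u v, α u v ≤ 1) (hβ : ∀ u, β u ≤ 1)
    (ψ : Fin K → Finset V) :
    {u : V | ∃ m : ℕ,
        t u ≤ minfo α t (fun u (j : Fin K) => if u ∈ ψ j then β u * I else 0) m u} =
    {u : V | ∃ m : ℕ,
        t u ≤ minfo α t
          (fun u (_ : Fin 1) => if u ∈ Finset.univ.biUnion ψ then β u * I else 0) m u} :=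
  identical_sources_eq_single_source_general α t I β ψ
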